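/- (Consistency error bound for the β-average) Let y : [t_{n−1}, t_{n+1}] → ℝ be twice continuously differentiable, k_{n−1} = t_n − t_{n−1} > 0, k_n = t_{n+1} − t_n > 0, and let β₂, β₁, β₀ be the DLN weights for θ ∈ [0,1] and ε = (k_n−k_{n−1})/(k_n+k_{n−1}). Then there is a constant C (independent of y and of the step sizes) such that |β₂y(t_{n+1}) + β₁y(t_n) + β₀y(t_{n−1}) − y(t_{n,β})|² ≤ C (k_n + k_{n−1})³ ∫_{t_{n−1}}^{t_{n+1}} |y″(t)|² dt, where t_{n,β} = β₂t_{n+1} + β₁t_n + β₀t_{n−1}. -/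

import Mathlib

/-!
Let `R t = y t - y tₙ - y'(tₙ) (t - tₙ)`. Because the weights sum to one and `t_{n,β}` is their
barycentre, the rule reproduces affine functions, so the error equals
`β₂ R(tₙ₊₁) + β₀ R(tₙ₋₁) - R(t_{n,β})`, and `|R t| ≤ |t - tₙ| ∫ |y''|` by Taylor's formula.
The weights themselves blow up as `ε → -1`, but `β₂ kₙ` and `β₀ kₙ₋₁` stay below a fixed multiple
of `h = kₙ + kₙ₋₁`, and `t_{n,β}` stays in `[tₙ₋₁, tₙ₊₁]`. Hence the error is at most
`4 h ∫ |y''|`, and Cauchy–Schwarz, `(∫ |y''|)² ≤ h ∫ |y''|²`, gives the bound with `C = 16`.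
-/

open Set MeasureTheory intervalIntegral

section Calculus

variable {f : ℝ → ℝ} {a b u v : ℝ}

theorem ContDiffOn.continuousOn_derivWithin_derivWithin_Icc (hab : a < b)
    (hf : ContDiffOn ℝ 2 f (Icc a b)) :
    ContinuousOn (derivWithin (derivWithin f (Icc a b)) (Icc a b)) (Icc a b) :=
  (hf.derivWithin (uniqueDiffOn_Icc hab) (by norm_num)).continuousOn_derivWithin
    (uniqueDiffOn_Icc hab) le_rfl

theorem integral_derivWithin_Icc_of_mem (hab : a < b) (hf : ContDiffOn ℝ 1 f (Icc a b))
    (hu : u ∈ Icc a b) (hv : v ∈ Icc a b) :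
    ∫ x in u..v, derivWithin f (Icc a b) x = f v - f u := by
  have hsub : uIcc u v ⊆ Icc a b := uIcc_subset_Icc hu hv
  refine integral_eq_sub_of_hasDeriv_right (hf.continuousOn.mono hsub) (fun x hx => ?_)
    ((hf.continuousOn_derivWithin (uniqueDiffOn_Icc hab) le_rfl).mono hsub).intervalIntegrable
  have hx' : x ∈ Ioo a b :=
    ⟨(le_min hu.1 hv.1).trans_lt hx.1, hx.2.trans_le (max_le hu.2 hv.2)⟩
  exact ((hf.differentiableOn one_ne_zero x (Ioo_subset_Icc_self hx')).hasDerivWithinAt.hasDerivAt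
    (Icc_mem_nhds hx'.1 hx'.2)).hasDerivWithinAt

theorem abs_derivWithin_sub_le_integral (hab : a < b) (hf : ContDiffOn ℝ 2 f (Icc a b))
    (hu : u ∈ Icc a b) (hv : v ∈ Icc a b) :
    |derivWithin f (Icc a b) v - derivWithin f (Icc a b) u|
      ≤ ∫ x in a..b, |derivWithin (derivWithin f (Icc a b)) (Icc a b) x| := by
  set D2 := derivWithin (derivWithin f (Icc a b)) (Icc a b)
  have hD2 : ContinuousOn D2 (Icc a b) := hf.continuousOn_derivWithin_derivWithin_Icc hab
  rw [← integral_derivWithin_Icc_of_mem hab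
    (hf.derivWithin (uniqueDiffOn_Icc hab) (by norm_num)) hu hv]
  calc |∫ x in u..v, D2 x| ≤ |(∫ x in u..v, |D2 x|)| :=
        norm_integral_le_abs_integral_norm (f := D2)
    _ ≤ |(∫ x in a..b, |D2 x|)| := by
      refine abs_integral_mono_interval ?_ (.of_forall fun _ => abs_nonneg _)
        (hD2.abs.intervalIntegrable_of_Icc hab.le)
      rw [uIoc_of_le hab.le]
      exact Ioc_subset_Ioc (le_min hu.1 hv.1) (max_le hu.2 hv.2)
    _ = ∫ x in a..b, |D2 x| := abs_of_nonneg (integral_nonneg hab.le fun _ _ => abs_nonneg _)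

theorem abs_taylor_remainder_le (hab : a < b) (hf : ContDiffOn ℝ 2 f (Icc a b))
    (hu : u ∈ Icc a b) (hv : v ∈ Icc a b) :
    |f v - f u - derivWithin f (Icc a b) u * (v - u)|
      ≤ |v - u| * ∫ x in a..b, |derivWithin (derivWithin f (Icc a b)) (Icc a b) x| := by
  set D := derivWithin f (Icc a b)
  have hsub : uIcc u v ⊆ Icc a b := uIcc_subset_Icc hu hv
  have hD : ContinuousOn D (Icc a b) :=
    hf.continuousOn_derivWithin (uniqueDiffOn_Icc hab) one_le_two
  have hremainder : f v - f u - D u * (v - u) = ∫ x in u..v, (D x - D u) := by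
    rw [integral_sub (hD.mono hsub).intervalIntegrable intervalIntegrable_const,
      integral_derivWithin_Icc_of_mem hab (hf.of_le one_le_two) hu hv,
      intervalIntegral.integral_const, smul_eq_mul]
    ring
  rw [hremainder, mul_comm, ← Real.norm_eq_abs]
  exact norm_integral_le_of_norm_le_const fun x hx =>
    abs_derivWithin_sub_le_integral hab hf hu (hsub (uIoc_subset_uIcc hx))

theorem sq_integral_abs_le_mul_integral_sq (hab : a ≤ b) (hf : ContinuousOn f (Icc a b)) :
    (∫ x in a..b, |f x|) ^ 2 ≤ (b - a) * ∫ x in a..b, f x ^ 2 := by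
  have h₁ : IntervalIntegrable (fun x => |f x|) volume a b :=
    hf.abs.intervalIntegrable_of_Icc hab
  have h₂ : IntervalIntegrable (fun x => f x ^ 2) volume a b :=
    (hf.pow 2).intervalIntegrable_of_Icc hab
  -- Cauchy–Schwarz via the discriminant of `m ↦ ∫ (|f| - m)²`
  have hquad : ∀ m : ℝ, 0 ≤ (b - a) * (m * m) + (-2 * ∫ x in a..b, |f x|) * m
      + ∫ x in a..b, f x ^ 2 := fun m => by
    have hexpand : ∀ x, (|f x| - m) ^ 2 = f x ^ 2 - m * 2 * |f x| + m ^ 2 := fun x => by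
      rw [sub_sq, sq_abs]; ring
    have hnonneg : 0 ≤ ∫ x in a..b, (|f x| - m) ^ 2 := integral_nonneg hab fun _ _ => sq_nonneg _
    simp_rw [hexpand] at hnonneg
    rw [integral_add (h₂.sub (h₁.const_mul _)) intervalIntegrable_const,
      integral_sub h₂ (h₁.const_mul _), intervalIntegral.integral_const_mul,
      intervalIntegral.integral_const, smul_eq_mul] at hnonneg
    linarith
  have := discrim_le_zero hquad
  rw [discrim] at this
  linarith

theorem integral_sq_abs_deriv_deriv_eq (hab : a ≤ b) :
    ∫ x in a..b, |deriv (deriv f) x| ^ 2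
      = ∫ x in a..b, derivWithin (derivWithin f (Icc a b)) (Icc a b) x ^ 2 := by
  have hderiv : EqOn (deriv f) (derivWithin f (Icc a b)) (Ioo a b) := fun x hx =>
    (derivWithin_of_mem_nhds (Icc_mem_nhds hx.1 hx.2)).symm
  have hderiv2 : EqOn (deriv (deriv f)) (derivWithin (derivWithin f (Icc a b)) (Icc a b))
      (Ioo a b) := fun x hx => by
    rw [(Filter.eventuallyEq_of_mem (Ioo_mem_nhds hx.1 hx.2) hderiv).deriv_eq,
      derivWithin_of_mem_nhds (Icc_mem_nhds hx.1 hx.2)]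
  rw [integral_of_le hab, integral_of_le hab, integral_Ioc_eq_integral_Ioo,
    integral_Ioc_eq_integral_Ioo]
  exact setIntegral_congr_fun measurableSet_Ioo fun x hx => by rw [sq_abs, hderiv2 hx]

end Calculus

noncomputable def dlnBeta₂ (θ ε : ℝ) : ℝ :=
  (1/4) * (1 + (1 - θ^2)/(1 + ε*θ)^2 + ε^2 * θ * (1 - θ^2)/(1 + ε*θ)^2 + θ)

noncomputable def dlnBeta₁ (θ ε : ℝ) : ℝ := (1/2) * (1 - (1 - θ^2)/(1 + ε*θ)^2)

noncomputable def dlnBeta₀ (θ ε : ℝ) : ℝ :=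
  (1/4) * (1 + (1 - θ^2)/(1 + ε*θ)^2 - ε^2 * θ * (1 - θ^2)/(1 + ε*θ)^2 - θ)

noncomputable def dlnRatio (θ ε : ℝ) : ℝ := (1 - θ^2)/(1 + ε*θ)^2

theorem dlnBeta_sum (θ ε : ℝ) : dlnBeta₂ θ ε + dlnBeta₁ θ ε + dlnBeta₀ θ ε = 1 := by
  unfold dlnBeta₂ dlnBeta₁ dlnBeta₀
  ring

theorem dlnBeta₂_eq (θ ε : ℝ) : dlnBeta₂ θ ε = (1 + θ + (1 + ε^2 * θ) * dlnRatio θ ε) / 4 := by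
  unfold dlnBeta₂ dlnRatio
  ring

theorem dlnBeta₀_eq (θ ε : ℝ) : dlnBeta₀ θ ε = (1 - θ + (1 - ε^2 * θ) * dlnRatio θ ε) / 4 := by
  unfold dlnBeta₀ dlnRatio
  ring

section Weights

variable {θ ε : ℝ}

-- `1 + εθ = (1 - θ) + θ (1 + ε)` is a convex combination of `1` and `1 + ε`
theorem one_sub_le_one_add_mul (hθ : θ ∈ Icc 0 1) (hε : ε ∈ Ioo (-1) 1) :
    1 - θ ≤ 1 + ε * θ := by
  nlinarith [hθ.1, hε.1]

theorem half_one_add_le_one_add_mul (hθ : θ ∈ Icc 0 1) (hε : ε ∈ Ioo (-1) 1) :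
    (1 + ε) / 2 ≤ 1 + ε * θ := by
  nlinarith [hθ.1, hθ.2, hε.1, hε.2]

theorem one_add_mul_pos (hθ : θ ∈ Icc 0 1) (hε : ε ∈ Ioo (-1) 1) : 0 < 1 + ε * θ := by
  linarith [half_one_add_le_one_add_mul hθ hε, hε.1]

theorem dlnRatio_nonneg (hθ : θ ∈ Icc 0 1) : 0 ≤ dlnRatio θ ε :=
  div_nonneg (by nlinarith [hθ.1, hθ.2]) (sq_nonneg _)

theorem dlnRatio_mul_one_add_le (hθ : θ ∈ Icc 0 1) (hε : ε ∈ Ioo (-1) 1) :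
    dlnRatio θ ε * (1 + ε) ≤ 4 := by
  have hp₁ := one_sub_le_one_add_mul hθ hε
  have hp₂ := half_one_add_le_one_add_mul hθ hε
  rw [dlnRatio, div_mul_eq_mul_div, div_le_iff₀ (pow_pos (one_add_mul_pos hθ hε) 2)]
  nlinarith [mul_le_mul hp₁ hp₂ (by linarith [hε.1]) (by linarith [hθ.2]),
    mul_nonneg (sub_nonneg.2 hθ.2) (by linarith [hε.1] : (0:ℝ) ≤ 1 + ε), hθ.2]

theorem dlnRatio_mul_one_sub_le (hθ : θ ∈ Icc 0 1) (hε : ε ∈ Ioo (-1) 1) :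
    dlnRatio θ ε * (1 - ε^2 * θ) ≤ 4 := by
  have hp := one_add_mul_pos hθ hε
  have hp₁ := one_sub_le_one_add_mul hθ hε
  obtain ⟨hθ₀, hθ₁⟩ := hθ
  obtain ⟨hε₀, hε₁⟩ := hε
  have hsq : 1 - θ^2 ≤ 2 * (1 + ε * θ) := by nlinarith
  have hconj : 1 - ε^2 * θ ≤ (1 - ε * θ) * (1 + ε * θ) := by
    nlinarith [mul_nonneg (sq_nonneg ε) (mul_nonneg hθ₀ (sub_nonneg.2 hθ₁))]
  have hθsq : 0 ≤ 1 - θ^2 := by nlinarith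
  have hconj' : 0 ≤ 1 - ε * θ := by nlinarith
  have htwo : 1 - ε * θ ≤ 2 := by nlinarith
  rw [dlnRatio, div_mul_eq_mul_div, div_le_iff₀ (pow_pos hp 2)]
  calc (1 - θ^2) * (1 - ε^2 * θ) ≤ (1 - θ^2) * ((1 - ε * θ) * (1 + ε * θ)) :=
        mul_le_mul_of_nonneg_left hconj hθsq
    _ ≤ (2 * (1 + ε * θ) * 2) * (1 + ε * θ) := by
        rw [← mul_assoc]
        exact mul_le_mul_of_nonneg_right (mul_le_mul hsq htwo hconj' (by linarith)) hp.le
    _ = 4 * (1 + ε * θ)^2 := by ring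

theorem dlnBeta₂_nonneg (hθ : θ ∈ Icc 0 1) : 0 ≤ dlnBeta₂ θ ε := by
  rw [dlnBeta₂_eq]
  have := dlnRatio_nonneg (ε := ε) hθ
  have : 0 ≤ ε^2 * θ := mul_nonneg (sq_nonneg ε) hθ.1
  have : 0 ≤ (1 + ε^2 * θ) * dlnRatio θ ε := by positivity
  linarith [hθ.1]

theorem dlnBeta₀_nonneg (hθ : θ ∈ Icc 0 1) (hε : ε ∈ Ioo (-1) 1) : 0 ≤ dlnBeta₀ θ ε := by
  rw [dlnBeta₀_eq]
  have : ε^2 * θ ≤ 1 := by nlinarith [hθ.1, hθ.2, hε.1, hε.2]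
  have := mul_nonneg (sub_nonneg.2 this) (dlnRatio_nonneg (ε := ε) hθ)
  linarith [hθ.2]

theorem dlnBeta₂_mul_one_add_le (hθ : θ ∈ Icc 0 1) (hε : ε ∈ Ioo (-1) 1) :
    dlnBeta₂ θ ε * (1 + ε) ≤ 3 := by
  rw [dlnBeta₂_eq]
  have hq := dlnRatio_mul_one_add_le hθ hε
  have : ε^2 * θ ≤ 1 := by nlinarith [hθ.1, hθ.2, hε.1, hε.2]
  have := mul_le_mul_of_nonneg_left hq (mul_nonneg (sq_nonneg ε) hθ.1)
  nlinarith [hθ.2, hε.2]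

theorem dlnBeta₀_le (hθ : θ ∈ Icc 0 1) (hε : ε ∈ Ioo (-1) 1) : dlnBeta₀ θ ε ≤ 5 / 4 := by
  rw [dlnBeta₀_eq]
  linarith [dlnRatio_mul_one_sub_le hθ hε, hθ.1]

-- this is `2 (t_{n,β} - tₙ) / (kₙ + kₙ₋₁)`
theorem dlnBeta_shift_eq (hθ : θ ∈ Icc 0 1) (hε : ε ∈ Ioo (-1) 1) :
    dlnBeta₂ θ ε * (1 + ε) - dlnBeta₀ θ ε * (1 - ε)
      = (θ + 2 * ε + ε^2 * θ) / (2 * (1 + ε * θ)) := by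
  have hp : 1 + θ * ε ≠ 0 := by rw [mul_comm]; exact (one_add_mul_pos hθ hε).ne'
  rw [dlnBeta₂_eq, dlnBeta₀_eq, dlnRatio]
  field_simp
  ring

theorem dlnBeta_shift_mem (hθ : θ ∈ Icc 0 1) (hε : ε ∈ Ioo (-1) 1) :
    dlnBeta₂ θ ε * (1 + ε) - dlnBeta₀ θ ε * (1 - ε) ∈ Icc (-(1 - ε)) (1 + ε) := by
  have hp : 0 < 2 * (1 + ε * θ) := by linarith [one_add_mul_pos hθ hε]
  rw [dlnBeta_shift_eq hθ hε, mem_Icc, le_div_iff₀ hp, div_le_iff₀ hp]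
  obtain ⟨hθ₀, hθ₁⟩ := hθ
  obtain ⟨hε₀, hε₁⟩ := hε
  constructor
  · nlinarith [mul_nonneg hθ₀
      (mul_nonneg (by linarith : (0:ℝ) ≤ 3 - ε) (by linarith : (0:ℝ) ≤ 1 + ε))]
  · nlinarith [mul_nonneg hθ₀ (sq_nonneg (1 + ε))]

end Weights

theorem sub_div_add_mem_Ioo {k k' : ℝ} (hk : 0 < k) (hk' : 0 < k') :
    (k - k') / (k + k') ∈ Ioo (-1) 1 := by
  constructor
  · rw [lt_div_iff₀ (by linarith)]; linarith
  · rw [div_lt_one (by linarith)]; linarith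

theorem abs_three_point_average_sub_le {f : ℝ → ℝ} {a b c s₂ s₀ w₂ w₁ w₀ : ℝ} (hab : a < b)
    (hf : ContDiffOn ℝ 2 f (Icc a b)) (hw : w₂ + w₁ + w₀ = 1)
    (hs₂ : s₂ ∈ Icc a b) (hc : c ∈ Icc a b) (hs₀ : s₀ ∈ Icc a b)
    (hs : w₂ * s₂ + w₁ * c + w₀ * s₀ ∈ Icc a b) :
    |w₂ * f s₂ + w₁ * f c + w₀ * f s₀ - f (w₂ * s₂ + w₁ * c + w₀ * s₀)|
      ≤ (|w₂| * |s₂ - c| + |w₀| * |s₀ - c| + |w₂ * s₂ + w₁ * c + w₀ * s₀ - c|)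
        * ∫ x in a..b, |derivWithin (derivWithin f (Icc a b)) (Icc a b) x| := by
  set s := w₂ * s₂ + w₁ * c + w₀ * s₀ with hs_def
  set J := ∫ x in a..b, |derivWithin (derivWithin f (Icc a b)) (Icc a b) x|
  set R := fun t => f t - f c - derivWithin f (Icc a b) c * (t - c)
  -- the rule reproduces affine functions, so only the Taylor remainders at `c` contribute
  have hR : w₂ * f s₂ + w₁ * f c + w₀ * f s₀ - f s = w₂ * R s₂ + w₀ * R s₀ - R s := by
    simp only [R, hs_def]
    linear_combination (f c - derivWithin f (Icc a b) c * c) * hw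
  calc |w₂ * f s₂ + w₁ * f c + w₀ * f s₀ - f s|
      ≤ |w₂| * |R s₂| + |w₀| * |R s₀| + |R s| := by
        rw [hR, ← abs_mul, ← abs_mul]
        exact (abs_sub _ _).trans (by gcongr; exact abs_add_le _ _)
    _ ≤ |w₂| * (|s₂ - c| * J) + |w₀| * (|s₀ - c| * J) + |s - c| * J := by
        gcongr
        · exact abs_taylor_remainder_le hab hf hc hs₂
        · exact abs_taylor_remainder_le hab hf hc hs₀
        · exact abs_taylor_remainder_le hab hf hc hs
    _ = (|w₂| * |s₂ - c| + |w₀| * |s₀ - c| + |s - c|) * J := by ring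

-- `dlnAverage θ id tnm tn tnp` is the node `t_{n,β}`
noncomputable def dlnAverage (θ : ℝ) (f : ℝ → ℝ) (tnm tn tnp : ℝ) : ℝ :=
  let ε := ((tnp - tn) - (tn - tnm)) / ((tnp - tn) + (tn - tnm))
  dlnBeta₂ θ ε * f tnp + dlnBeta₁ θ ε * f tn + dlnBeta₀ θ ε * f tnm

theorem abs_dlnAverage_sub_le {θ tnm tn tnp : ℝ} {f : ℝ → ℝ} (hθ : θ ∈ Icc 0 1)
    (h₁ : tnm < tn) (h₂ : tn < tnp) (hf : ContDiffOn ℝ 2 f (Icc tnm tnp)) :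
    |dlnAverage θ f tnm tn tnp - f (dlnAverage θ id tnm tn tnp)|
      ≤ 4 * (tnp - tnm)
        * ∫ x in tnm..tnp, |derivWithin (derivWithin f (Icc tnm tnp)) (Icc tnm tnp) x| := by
  have hab : tnm < tnp := h₁.trans h₂
  have hε := sub_div_add_mem_Ioo (sub_pos.2 h₂) (sub_pos.2 h₁)
  have hεk :=
    div_mul_cancel₀ (tnp - tn - (tn - tnm)) (by linarith : tnp - tn + (tn - tnm) ≠ 0)
  unfold dlnAverage
  dsimp only [id]
  generalize (tnp - tn - (tn - tnm)) / (tnp - tn + (tn - tnm)) = ε at hε hεk ⊢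
  have hsum := dlnBeta_sum θ ε
  set β₂ := dlnBeta₂ θ ε
  set β₁ := dlnBeta₁ θ ε
  set β₀ := dlnBeta₀ θ ε
  have hβ₂ : 0 ≤ β₂ := dlnBeta₂_nonneg hθ
  have hβ₀ : 0 ≤ β₀ := dlnBeta₀_nonneg hθ hε
  -- `tnp - tn = (1 + ε) h / 2` and `tn - tnm = (1 - ε) h / 2` with `h = tnp - tnm`
  have hβ₂k : β₂ * (tnp - tn) ≤ 3 / 2 * (tnp - tnm) := by
    nlinarith [mul_le_mul_of_nonneg_right (dlnBeta₂_mul_one_add_le hθ hε) (sub_pos.2 hab).le]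
  have hβ₀k : β₀ * (tn - tnm) ≤ 5 / 4 * (tnp - tnm) := by
    nlinarith [mul_le_mul_of_nonneg_right (dlnBeta₀_le hθ hε) (sub_pos.2 h₁).le]
  have hnode : 2 * (β₂ * tnp + β₁ * tn + β₀ * tnm - tn)
      = (β₂ * (1 + ε) - β₀ * (1 - ε)) * (tnp - tnm) := by
    linear_combination 2 * tn * hsum - (β₂ + β₀) * hεk
  obtain ⟨hlo, hhi⟩ := dlnBeta_shift_mem hθ hε
  have hmem : β₂ * tnp + β₁ * tn + β₀ * tnm ∈ Icc tnm tnp := by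
    constructor <;> nlinarith
  refine (abs_three_point_average_sub_le hab hf hsum (right_mem_Icc.2 hab.le) ⟨h₁.le, h₂.le⟩
    (left_mem_Icc.2 hab.le) hmem).trans
    (mul_le_mul_of_nonneg_right ?_ (integral_nonneg hab.le fun _ _ => abs_nonneg _))
  rw [abs_of_nonneg hβ₂, abs_of_nonneg hβ₀, abs_of_pos (sub_pos.2 h₂), abs_of_neg (sub_neg.2 h₁)]
  have := abs_sub_le_of_le_of_le hmem.1 hmem.2 h₁.le h₂.le
  linarith

theorem dln_beta_average_consistency_bound :
    ∃ C : ℝ, 0 < C ∧ ∀ (θ : ℝ), θ ∈ Set.Icc (0:ℝ) 1 →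
      ∀ (tnm tn tnp : ℝ) (y : ℝ → ℝ),
      tnm < tn → tn < tnp →
      ContDiffOn ℝ 2 y (Set.Icc tnm tnp) →
      let kn : ℝ := tnp - tn
      let knm : ℝ := tn - tnm
      let ε : ℝ := (kn - knm) / (kn + knm)
      let β₂ : ℝ := (1/4) * (1 + (1 - θ^2)/(1 + ε*θ)^2 + ε^2 * θ * (1 - θ^2)/(1 + ε*θ)^2 + θ)
      let β₁ : ℝ := (1/2) * (1 - (1 - θ^2)/(1 + ε*θ)^2)
      let β₀ : ℝ := (1/4) * (1 + (1 - θ^2)/(1 + ε*θ)^2 - ε^2 * θ * (1 - θ^2)/(1 + ε*θ)^2 - θ)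
      let tβ : ℝ := β₂ * tnp + β₁ * tn + β₀ * tnm
      |β₂ * y tnp + β₁ * y tn + β₀ * y tnm - y tβ|^2
        ≤ C * (kn + knm)^3 * ∫ t in tnm..tnp, |deriv (deriv y) t|^2 := by
  refine ⟨16, by norm_num, fun θ hθ tnm tn tnp y h₁ h₂ hy => ?_⟩
  have hab : tnm < tnp := h₁.trans h₂
  set D2 := derivWithin (derivWithin y (Icc tnm tnp)) (Icc tnm tnp)
  have herr := abs_dlnAverage_sub_le hθ h₁ h₂ hy
  have hcs : (∫ x in tnm..tnp, |D2 x|) ^ 2 ≤ (tnp - tnm) * ∫ x in tnm..tnp, D2 x ^ 2 :=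
    sq_integral_abs_le_mul_integral_sq hab.le (hy.continuousOn_derivWithin_derivWithin_Icc hab)
  show |dlnAverage θ y tnm tn tnp - y (dlnAverage θ id tnm tn tnp)| ^ 2
    ≤ 16 * (tnp - tn + (tn - tnm)) ^ 3 * ∫ t in tnm..tnp, |deriv (deriv y) t| ^ 2
  rw [integral_sq_abs_deriv_deriv_eq hab.le, show tnp - tn + (tn - tnm) = tnp - tnm by ring]
  calc |dlnAverage θ y tnm tn tnp - y (dlnAverage θ id tnm tn tnp)| ^ 2
      ≤ (4 * (tnp - tnm) * ∫ x in tnm..tnp, |D2 x|) ^ 2 := pow_le_pow_left₀ (abs_nonneg _) herr 2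
    _ = 16 * (tnp - tnm) ^ 2 * (∫ x in tnm..tnp, |D2 x|) ^ 2 := by ring
    _ ≤ 16 * (tnp - tnm) ^ 2 * ((tnp - tnm) * ∫ x in tnm..tnp, D2 x ^ 2) := by gcongr
    _ = 16 * (tnp - tnm) ^ 3 * ∫ x in tnm..tnp, D2 x ^ 2 := by ring
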